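/- Let θ ∈ R^ℤ be any rule distribution over a finite rule set such that the non-uniform cellular automaton H_θ : Σ^ℤ → Σ^ℤ is bijective. Then H_θ is balanced: for every finite domain D and every pattern p ∈ Σ^D, the number of patterns q ∈ Σ^(N_θ(D)) mapping to p under the finite-domain map equals |Σ|^(|N_θ(D)|−|D|). -/

import Mathlib

open Function

/-- `f` is a local rule of radius (at most) `r`: it only depends on coordinates in `[-r, r]`. -/
def IsLocalRule {A : Type*} (r : ℕ) (f : (ℤ → A) → A) : Prop :=
  ∀ u v : ℤ → A, (∀ i : ℤ, -(r : ℤ) ≤ i → i ≤ (r : ℤ) → u i = v i) → f u = f v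

/-- The global map of the non-uniform cellular automaton with rule distribution `θ`. -/
def nuca {A : Type*} (θ : ℤ → ((ℤ → A) → A)) (c : ℤ → A) : ℤ → A :=
  fun x => θ x (fun i => c (x + i))

/-- A configuration `θ : ℤ → R` is (spatially) recurrent: every finite pattern
occurs in some other (translated) position. -/
def Recurrent {R : Type*} (θ : ℤ → R) : Prop :=
  ∀ (a : ℤ) (m : ℕ), ∃ k : ℤ, k ≠ 0 ∧ ∀ i : ℕ, i < m → θ (a + k + i) = θ (a + i)

/-- A configuration `θ : ℤ → R` is (spatially) uniformly recurrent: every finite pattern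
occurs with bounded gaps. -/
def UnifRecurrent {R : Type*} (θ : ℤ → R) : Prop :=
  ∀ (a : ℤ) (m : ℕ), ∃ n : ℕ, ∀ x : ℤ, ∃ k : ℤ, x ≤ k ∧ k ≤ x + (n : ℤ) ∧
    ∀ i : ℕ, i < m → θ (k + i) = θ (a + i)

/-- `φ` lies in the orbit closure of `θ` under the shift (combinatorial characterization:
every finite pattern of `φ` occurs in `θ`). -/
def InOrbitClosure {R : Type*} (φ θ : ℤ → R) : Prop :=
  ∀ (a : ℤ) (m : ℕ), ∃ k : ℤ, ∀ i : ℕ, i < m → φ (a + i) = θ (a + k + i)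

/-- The radius-`r` neighbourhood of a finite domain `D`. -/
noncomputable def nbhd (r : ℕ) (D : Finset ℤ) : Finset ℤ :=
  D.biUnion (fun x => Finset.Icc (x - (r : ℤ)) (x + (r : ℤ)))

/-- A NUCA (with radius-`r` rules) is balanced: every pattern on a finite domain `D` has
exactly `|Σ|^(|N(D)|-|D|)` preimage patterns on the neighbourhood `N(D)`. -/
def NucaBalanced {A : Type*} [Fintype A] (r : ℕ) (θ : ℤ → ((ℤ → A) → A)) : Prop :=
  ∀ (D : Finset ℤ) (p : ℤ → A),
    Nat.card {q : { y : ℤ // y ∈ nbhd r D } → A //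
      ∀ c : ℤ → A, (∀ i : { y : ℤ // y ∈ nbhd r D }, c i.1 = q i) →
        ∀ x ∈ D, nuca θ c x = p x} =
      Fintype.card A ^ ((nbhd r D).card - D.card)

/-- `c` is an equicontinuity point of the NUCA `θ`. -/
def EqPt {A : Type*} (θ : ℤ → ((ℤ → A) → A)) (c : ℤ → A) : Prop :=
  ∀ E : Finset ℤ, ∃ D : Finset ℤ, ∀ e : ℤ → A, (∀ x ∈ D, e x = c x) →
    ∀ n : ℕ, 1 ≤ n → ∀ x ∈ E, (nuca θ)^[n] e x = (nuca θ)^[n] c x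

/-- The NUCA `θ` is sensitive to initial conditions. -/
def Sensitive {A : Type*} (θ : ℤ → ((ℤ → A) → A)) : Prop :=
  ∃ E : Finset ℤ, ∀ c : ℤ → A, ∀ D : Finset ℤ, ∃ e : ℤ → A,
    (∀ x ∈ D, e x = c x) ∧ ∃ n : ℕ, 1 ≤ n ∧ ∃ x ∈ E, (nuca θ)^[n] e x ≠ (nuca θ)^[n] c x

/-
Write `H = nuca θ`, fix a finite domain `D`, and let `E = N(D)` and `S = N(E)`. A cell outside
`S` only sees cells outside `E`, so a configuration `c` with `H c = y` on `D ∪ Sᶜ` is exactly a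
pair made of a preimage pattern of `y` on `D` (living on `E`) and a pattern on `Eᶜ` forcing `y` on
`Sᶜ`. As `H` is a bijection, the number of such `c` is the number of configurations agreeing with
`y` on `D ∪ Sᶜ`, that is `|A| ^ |S \ D|`. Changing `y` on `D` only changes the first factor, so
every pattern on `D` has the same number of preimages; since these preimage sets partition `A ^ E`,
that number is `|A| ^ (|E| - |D|)`.
-/

section Patterns

variable {ι A : Type*}

/-- For `s = N(D)` and `P c := ∀ x ∈ D, H c x = p x` these are the preimages of `p|D` counted in
`NucaBalanced`. -/
def forcingPatterns (s : Set ι) (P : (ι → A) → Prop) : Set (s → A) :=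
  {q | ∀ c : ι → A, (∀ i : s, c i = q i) → P c}

theorem mem_forcingPatterns_iff {s : Set ι} {P : (ι → A) → Prop} (hP : DependsOn P s)
    {q : s → A} {c : ι → A} (hc : ∀ i : s, c i = q i) :
    q ∈ forcingPatterns s P ↔ P c :=
  ⟨fun h => h c hc, fun h _ hc' =>
    (hP fun i hi => (hc ⟨i, hi⟩).trans (hc' ⟨i, hi⟩).symm) ▸ h⟩

open Classical in
noncomputable def forcingPatternsProdEquiv {s : Set ι} {P Q : (ι → A) → Prop}
    (hP : DependsOn P s) (hQ : DependsOn Q sᶜ) :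
    {c : ι → A // P c ∧ Q c} ≃ forcingPatterns s P × forcingPatterns sᶜ Q :=
  ((Equiv.piEquivPiSubtypeProd (· ∈ s) fun _ => A).subtypeEquiv fun _ =>
    and_congr (mem_forcingPatterns_iff hP fun _ => rfl).symm
      (mem_forcingPatterns_iff hQ fun _ => rfl).symm).trans Equiv.subtypeProdEquivProd

open Classical in
noncomputable def subtypeEqOnEquiv (t : Set ι) (g : ι → A) :
    {f : ι → A // Set.EqOn f g t} ≃ (↥tᶜ → A) where
  toFun f i := f.1 i
  invFun u := ⟨fun i => if h : i ∈ t then g i else u ⟨i, h⟩, fun i hi => dif_pos hi⟩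
  left_inv f := by
    ext i
    by_cases hi : i ∈ t
    · simp [hi, f.2 hi]
    · simp [hi]
  right_inv u := by
    ext i
    simp [show i.1 ∉ t from i.2]

theorem dependsOn_forall_mem_eq {H : (ι → A) → ι → A} {D E : Set ι}
    (hD : ∀ x ∈ D, DependsOn (H · x) E) (y : ι → A) :
    DependsOn (fun c => ∀ x ∈ D, H c x = y x) E := fun _ _ h =>
  propext <| forall₂_congr fun x hx => by rw [show H _ x = H _ x from hD x hx h]

theorem card_forcingPatterns_mul_card_forcingPatterns {H : (ι → A) → ι → A}
    (hH : Bijective H) {D D' E : Set ι} (hD : ∀ x ∈ D, DependsOn (H · x) E)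
    (hD' : ∀ x ∈ D', DependsOn (H · x) Eᶜ) (y : ι → A) :
    Nat.card (forcingPatterns E fun c => ∀ x ∈ D, H c x = y x) *
        Nat.card (forcingPatterns Eᶜ fun c => ∀ x ∈ D', H c x = y x) =
      Nat.card (↥(D ∪ D')ᶜ → A) := by
  calc _ = Nat.card {c // (∀ x ∈ D, H c x = y x) ∧ ∀ x ∈ D', H c x = y x} :=
        (Nat.card_prod _ _).symm.trans (Nat.card_congr (forcingPatternsProdEquiv
          (dependsOn_forall_mem_eq hD y) (dependsOn_forall_mem_eq hD' y))).symm
    _ = Nat.card {f : ι → A // Set.EqOn f y (D ∪ D')} :=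
        Nat.card_congr <| (Equiv.ofBijective H hH).subtypeEquiv fun _ => forall₂_or_left.symm
    _ = Nat.card (↥(D ∪ D')ᶜ → A) := Nat.card_congr (subtypeEqOnEquiv _ _)

theorem card_forcingPatterns_eq_of_eqOn {H : (ι → A) → ι → A} (hH : Bijective H)
    {D D' E : Set ι} (hD : ∀ x ∈ D, DependsOn (H · x) E) (hD' : ∀ x ∈ D', DependsOn (H · x) Eᶜ)
    (hfree : Nat.card (↥(D ∪ D')ᶜ → A) ≠ 0) {y y' : ι → A} (hyy' : Set.EqOn y y' D') :
    Nat.card (forcingPatterns E fun c => ∀ x ∈ D, H c x = y x) =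
      Nat.card (forcingPatterns E fun c => ∀ x ∈ D, H c x = y' x) := by
  have hy := card_forcingPatterns_mul_card_forcingPatterns hH hD hD' y
  have hy' := card_forcingPatterns_mul_card_forcingPatterns hH hD hD' y'
  have hsame : (forcingPatterns Eᶜ fun c => ∀ x ∈ D', H c x = y x) =
      forcingPatterns Eᶜ fun c => ∀ x ∈ D', H c x = y' x := by
    congr! 4 with c x hx
    rw [hyy' hx]
  rw [hsame] at hy
  have hpos : Nat.card (forcingPatterns Eᶜ fun c => ∀ x ∈ D', H c x = y' x) ≠ 0 :=
    right_ne_zero_of_mul (hy'.trans_ne hfree)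
  exact Nat.eq_of_mul_eq_mul_right (Nat.pos_of_ne_zero hpos) (hy.trans hy'.symm)

end Patterns

theorem Nat.card_eq_card_mul_of_card_fiber_eq {α β : Type*} [Finite α] [Fintype β] {f : α → β}
    {m : ℕ} (h : ∀ b, Nat.card {a // f a = b} = m) : Nat.card α = Nat.card β * m := by
  rw [← Nat.card_congr (Equiv.sigmaFiberEquiv f), Nat.card_sigma,
    Finset.sum_congr rfl fun b _ => h b, Finset.sum_const, Finset.card_univ, smul_eq_mul,
    Nat.card_eq_fintype_card]

theorem card_forcingPatterns_mul_pow {ι A : Type*} [Fintype A] {H : (ι → A) → ι → A}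
    (hH : Bijective H) {D E S : Finset ι} (hDS : D ⊆ S) (hD : ∀ x ∈ D, DependsOn (H · x) E)
    (hS : ∀ x ∉ S, DependsOn (H · x) (↑E)ᶜ) (y : ι → A) :
    Nat.card (forcingPatterns E fun c => ∀ x ∈ D, H c x = y x) * Fintype.card A ^ D.card =
      Fintype.card A ^ E.card := by
  classical
  have hfree : Nat.card (↥((D : Set ι) ∪ (↑S)ᶜ)ᶜ → A) ≠ 0 := by
    have : Finite ↥((D : Set ι) ∪ (↑S)ᶜ)ᶜ :=
      (S.finite_toSet.subset <| by
        rw [Set.compl_union, compl_compl]; exact Set.inter_subset_right).to_subtype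
    exact Nat.card_ne_zero.2 ⟨⟨fun i => y i⟩, inferInstance⟩
  let φ : (E → A) → (D → A) := fun q x => H (extend Subtype.val q y) x
  have hfiber (b : D → A) : Nat.card {q // φ q = b} =
      Nat.card (forcingPatterns E fun c => ∀ x ∈ D, H c x = y x) := by
    calc Nat.card {q // φ q = b}
        = Nat.card (forcingPatterns E fun c => ∀ x ∈ D, H c x = extend Subtype.val b y x) := by
          refine Nat.card_congr (Equiv.subtypeEquivRight fun q => ?_)
          refine Iff.trans ?_ (mem_forcingPatterns_iff (dependsOn_forall_mem_eq hD _)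
            (Subtype.val_injective.extend_apply q y)).symm
          simp only [φ, funext_iff, Subtype.forall]
          exact forall₂_congr fun x hx => by
            rw [(Subtype.val_injective.extend_apply b y ⟨x, hx⟩ : extend Subtype.val b y x = _)]
      _ = _ := card_forcingPatterns_eq_of_eqOn hH hD hS hfree fun x hx =>
          extend_apply' _ _ _ fun ⟨a, ha⟩ => hx (ha ▸ hDS a.2)
  have hcount := Nat.card_eq_card_mul_of_card_fiber_eq hfiber
  rw [Nat.card_fun, Nat.card_fun, Nat.card_eq_finsetCard, Nat.card_eq_finsetCard,
    Nat.card_eq_fintype_card (α := A)] at hcount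
  rw [hcount, mul_comm]

section Nbhd

variable {r : ℕ} {D : Finset ℤ} {x : ℤ}

theorem mem_nbhd : x ∈ nbhd r D ↔ ∃ y ∈ D, y - r ≤ x ∧ x ≤ y + r := by
  simp [nbhd]

theorem Icc_subset_nbhd (hx : x ∈ D) : Set.Icc (x - r) (x + r) ⊆ nbhd r D :=
  fun _ hi => mem_nbhd.2 ⟨x, hx, hi⟩

theorem subset_nbhd : D ⊆ nbhd r D :=
  fun x hx => Icc_subset_nbhd hx ⟨by omega, by omega⟩

theorem Icc_subset_compl_nbhd (hx : x ∉ nbhd r (nbhd r D)) :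
    Set.Icc (x - r) (x + r) ⊆ (↑(nbhd r D))ᶜ :=
  fun i hi hiD => hx (mem_nbhd.2 ⟨i, hiD, by grind⟩)

end Nbhd

theorem IsLocalRule.dependsOn_nuca {A : Type*} {r : ℕ} {θ : ℤ → (ℤ → A) → A} {x : ℤ}
    (h : IsLocalRule r (θ x)) : DependsOn (nuca θ · x) (Set.Icc (x - r) (x + r)) :=
  fun _ _ hcc' => h _ _ fun i h₁ h₂ => hcc' (x + i) ⟨by omega, by omega⟩

theorem stmt_8_general {A : Type*} [Fintype A] (r : ℕ) (θ : ℤ → ((ℤ → A) → A))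
    (hloc : ∀ x, IsLocalRule r (θ x))
    (hbij : Function.Bijective (nuca θ)) :
    NucaBalanced r θ := by
  intro D p
  have hcount := card_forcingPatterns_mul_pow hbij (D := D) (subset_nbhd.trans subset_nbhd)
    (fun x hx => (hloc x).dependsOn_nuca.mono (Icc_subset_nbhd hx))
    (fun x hx => (hloc x).dependsOn_nuca.mono (Icc_subset_compl_nbhd hx)) p
  have hpos : 0 < Fintype.card A ^ D.card := pow_pos (Fintype.card_pos_iff.2 ⟨p 0⟩) _
  refine Nat.eq_of_mul_eq_mul_right hpos (hcount.trans ?_)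
  rw [← pow_add, Nat.sub_add_cancel (Finset.card_le_card subset_nbhd)]

/-- Any bijective NUCA (over a finite rule set on a finite alphabet) is balanced. -/
theorem stmt_8 {A : Type*} [Fintype A] (r : ℕ) (θ : ℤ → ((ℤ → A) → A))
    (hfin : (Set.range θ).Finite) (hloc : ∀ x, IsLocalRule r (θ x))
    (hbij : Function.Bijective (nuca θ)) :
    NucaBalanced r θ :=
  stmt_8_general r θ hloc hbij
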